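/- The sequences x_n^{(d)} and A_{2n}^{(d)} have the Lucas property: for every prime p, every n ≥ 0 and 0 ≤ q ≤ p-1, x_{np+q}^{(d)} ≡ x_n^{(d)} x_q^{(d)} (mod p) and A_{2(np+q)}^{(d)} ≡ A_{2n}^{(d)} A_{2q}^{(d)} (mod p). Moreover A_{2n}^{(d)} ≡ 0 (mod p) when (p-1)/2 < n ≤ p-1. -/

import Mathlib

/-!
Expanding `(∑ₛ X^{±eₜ})^{2n}` by the multinomial theorem and matching the number of `+eₜ` steps
with the number of `-eₜ` steps gives `A_{2n}^{(d)} = C(2n,n) x_n^{(d)}` with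
`x_n^{(d)} = ∑_{|k| = n} multinomial(k)²`. Splitting off one coordinate yields the recurrence
`x_n^{(d+1)} = ∑ₖ C(n,k)² x_k^{(d)}`, and the double Lucas congruence
`C(np+q, jp+r) ≡ C(n,j) C(q,r)` shows that this binomial-square transform preserves the Lucas
property. Induction on `d` from `x^{(0)} = δ₀` handles `x`; since `C(2n,n) = ∑ₖ C(n,k)²` is the
transform of the constant sequence `1`, `A_{2n}` is a product of two Lucas sequences. Finally
`p ∣ C(2n,n)` when `p/2 < n < p`.
-/

open Finset Nat

/-- The step of the walk on `ℤ^d` determined by a coordinate and a sign. -/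
def stepVec (d : ℕ) (s : Fin d × Bool) : Fin d → ℤ :=
  fun t => if t = s.1 then (if s.2 then 1 else -1) else 0

/-- `closedCount d n` is the number `A_{2n}^{(d)}` of walks of length `2n` on `ℤ^d`
starting and ending at the origin. -/
noncomputable def closedCount (d n : ℕ) : ℕ :=
  Nat.card {f : Fin (2 * n) → Fin d × Bool // ∑ i, stepVec d (f i) = 0}

/-- `x_n^{(d)} = A_{2n}^{(d)} / C(2n,n)` (an integer, here as exact natural division). -/
noncomputable def xSeq (d n : ℕ) : ℕ :=
  closedCount d n / (2 * n).choose n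

def HasLucasProperty (p : ℕ) (a : ℕ → ℕ) : Prop :=
  ∀ n q, q < p → a (n * p + q) ≡ a n * a q [MOD p]

def binomialSqTransform (a : ℕ → ℕ) (n : ℕ) : ℕ :=
  ∑ k ∈ range (n + 1), n.choose k ^ 2 * a k

lemma sum_range_mul_eq_sum_sum {M : Type*} [AddCommMonoid M] (f : ℕ → M) (m p : ℕ) :
    ∑ k ∈ range (m * p), f k = ∑ j ∈ range m, ∑ r ∈ range p, f (j * p + r) := by
  induction m with
  | zero => simp
  | succ m ih => rw [succ_mul, sum_range_add, ih, sum_range_succ]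

lemma sum_range_choose_sq_mul_eq_binomialSqTransform (a : ℕ → ℕ) {n m : ℕ} (h : n < m) :
    ∑ k ∈ range m, n.choose k ^ 2 * a k = binomialSqTransform a n := by
  refine (sum_subset (range_subset_range.2 h) fun k _ hk => ?_).symm
  rw [choose_eq_zero_of_lt (by simpa using hk)]
  simp

lemma mul_add_div_of_lt {n p q : ℕ} (hq : q < p) : (n * p + q) / p = n := by
  rw [add_comm, add_mul_div_right _ _ (by omega), div_eq_of_lt hq, zero_add]

lemma choose_mul_add_mul_add_modEq {p : ℕ} [Fact p.Prime] {q r : ℕ} (hq : q < p) (hr : r < p)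
    (n j : ℕ) : (n * p + q).choose (j * p + r) ≡ n.choose j * q.choose r [MOD p] := by
  have h := Choose.choose_modEq_choose_mod_mul_choose_div_nat (p := p)
    (n := n * p + q) (k := j * p + r)
  rwa [mul_add_mod_of_lt hq, mul_add_mod_of_lt hr, mul_add_div_of_lt hq, mul_add_div_of_lt hr,
    mul_comm (q.choose r)] at h

namespace HasLucasProperty

variable {p : ℕ} {a b : ℕ → ℕ}

lemma mul (ha : HasLucasProperty p a) (hb : HasLucasProperty p b) :
    HasLucasProperty p (a * b) := fun n q hq => by
  simpa only [Pi.mul_apply, mul_mul_mul_comm] using (ha n q hq).mul (hb n q hq)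

lemma binomialSqTransform [Fact p.Prime] (ha : HasLucasProperty p a) :
    HasLucasProperty p (binomialSqTransform a) := fun n q hq => by
  have hnq : n * p + q < (n + 1) * p := by rw [succ_mul]; omega
  calc _root_.binomialSqTransform a (n * p + q)
      = ∑ j ∈ range (n + 1), ∑ r ∈ range p,
          (n * p + q).choose (j * p + r) ^ 2 * a (j * p + r) := by
        rw [← sum_range_choose_sq_mul_eq_binomialSqTransform a hnq, sum_range_mul_eq_sum_sum]
    _ ≡ ∑ j ∈ range (n + 1), ∑ r ∈ range p,
          (n.choose j * q.choose r) ^ 2 * (a j * a r) [MOD p] :=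
        ModEq.sum fun j _ => ModEq.sum fun r hr =>
          ((choose_mul_add_mul_add_modEq hq (mem_range.1 hr) n j).pow 2).mul
            (ha j r (mem_range.1 hr))
    _ = (∑ j ∈ range (n + 1), n.choose j ^ 2 * a j) * ∑ r ∈ range p, q.choose r ^ 2 * a r := by
        rw [sum_mul_sum]
        exact sum_congr rfl fun j _ => sum_congr rfl fun r _ => by ring
    _ = _ := by rw [sum_range_choose_sq_mul_eq_binomialSqTransform a hq]; rfl

end HasLucasProperty

lemma hasLucasProperty_one (p : ℕ) : HasLucasProperty p 1 := fun _ _ _ => by simp [ModEq.refl]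

lemma binomialSqTransform_one : binomialSqTransform 1 = centralBinom := by
  ext n
  simp [binomialSqTransform, sum_range_choose_sq, centralBinom_eq_two_mul_choose]

lemma hasLucasProperty_centralBinom (p : ℕ) [Fact p.Prime] : HasLucasProperty p centralBinom :=
  binomialSqTransform_one ▸ (hasLucasProperty_one p).binomialSqTransform

lemma hasLucasProperty_ite_eq_zero (p : ℕ) :
    HasLucasProperty p fun n => if n = 0 then 1 else 0 := fun n q hq => by
  have hp : p ≠ 0 := by omega
  by_cases hn : n = 0 <;> by_cases hq0 : q = 0 <;> simp [hn, hq0, hp, ModEq.refl]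

section MultinomialSqSum

variable {ι : Type*} [DecidableEq ι]

def multinomialSqSum (s : Finset ι) (n : ℕ) : ℕ :=
  ∑ k ∈ s.piAntidiag n, multinomial s k ^ 2

lemma multinomialSqSum_empty :
    multinomialSqSum (∅ : Finset ι) = fun n => if n = 0 then 1 else 0 := by
  ext n
  by_cases hn : n = 0 <;> simp [multinomialSqSum, hn]

lemma multinomial_cons_add_ite {a : ι} {s : Finset ι} (ha : a ∉ s) {g : ι → ℕ}
    (hg : ∀ t, g t ≠ 0 → t ∈ s) (i : ℕ) :
    multinomial (cons a s ha) (g + fun t => if t = a then i else 0) =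
      (i + ∑ t ∈ s, g t).choose i * multinomial s g := by
  have hga : g a = 0 := by_contra fun h => ha (hg a h)
  have hs : ∀ t ∈ s, (g + fun t => if t = a then i else 0) t = g t := fun t ht => by
    simp [show t ≠ a by rintro rfl; exact ha ht]
  rw [multinomial_cons, sum_congr rfl hs, multinomial_congr hs]
  simp [hga]

lemma multinomialSqSum_cons {a : ι} {s : Finset ι} (ha : a ∉ s) :
    multinomialSqSum (cons a s ha) = binomialSqTransform (multinomialSqSum s) := by
  ext n
  calc multinomialSqSum (cons a s ha) n
      = ∑ ij ∈ antidiagonal n, n.choose ij.1 ^ 2 * multinomialSqSum s ij.2 := by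
        rw [multinomialSqSum, piAntidiag_cons, sum_disjiUnion]
        refine sum_congr rfl fun ij hij => ?_
        rw [sum_map, multinomialSqSum, mul_sum]
        refine sum_congr rfl fun g hg => ?_
        rw [mem_piAntidiag] at hg
        rw [addRightEmbedding_apply, multinomial_cons_add_ite ha hg.2, hg.1, mem_antidiagonal.1 hij,
          mul_pow]
    _ = ∑ ij ∈ antidiagonal n, n.choose ij.2 ^ 2 * multinomialSqSum s ij.1 := by
        rw [← Nat.sum_antidiagonal_swap]
        simp only [Prod.fst_swap, Prod.snd_swap]
    _ = ∑ k ∈ range (n + 1), n.choose (n - k) ^ 2 * multinomialSqSum s k :=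
        Nat.sum_antidiagonal_eq_sum_range_succ (fun i j => n.choose j ^ 2 * multinomialSqSum s i) n
    _ = _ := sum_congr rfl fun k hk => by rw [choose_symm (mem_range_succ_iff.1 hk)]

lemma hasLucasProperty_multinomialSqSum (p : ℕ) [Fact p.Prime] (s : Finset ι) :
    HasLucasProperty p (multinomialSqSum s) := by
  induction s using Finset.cons_induction with
  | empty => rw [multinomialSqSum_empty]; exact hasLucasProperty_ite_eq_zero p
  | cons a s ha ih => rw [multinomialSqSum_cons]; exact ih.binomialSqTransform

end MultinomialSqSum

section WordCount

variable {σ G : Type*} [Fintype σ] [AddCommMonoid G] (v : σ → G)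

lemma card_sum_eq_eq_coeff_pow (N : ℕ) (g : G) :
    Nat.card {f : Fin N → σ // ∑ i, v (f i) = g} =
      ((∑ s, AddMonoidAlgebra.single (v s) 1 : AddMonoidAlgebra ℕ G) ^ N).coeff g := by
  classical
  rw [← Fin.prod_const, prod_univ_sum, AddMonoidAlgebra.coeff_sum, Finsupp.finsetSum_apply]
  simp_rw [AddMonoidAlgebra.prod_single, prod_const_one, AddMonoidAlgebra.coeff_single,
    Finsupp.single_apply]
  rw [Nat.card_eq_fintype_card, Fintype.card_subtype, card_filter, Fintype.piFinset_univ]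

lemma coeff_pow_sum_single [DecidableEq σ] [DecidableEq G] (N : ℕ) (g : G) :
    ((∑ s, AddMonoidAlgebra.single (v s) 1 : AddMonoidAlgebra ℕ G) ^ N).coeff g =
      ∑ k ∈ (univ.piAntidiag N).filter (fun k => ∑ s, k s • v s = g), multinomial univ k := by
  rw [sum_pow_eq_sum_piAntidiag, AddMonoidAlgebra.coeff_sum, Finsupp.finsetSum_apply, sum_filter]
  refine sum_congr rfl fun k _ => ?_
  simp_rw [AddMonoidAlgebra.single_pow, one_pow]
  rw [AddMonoidAlgebra.prod_single, prod_const_one, ← nsmul_eq_mul, AddMonoidAlgebra.smul_single,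
    smul_eq_mul, mul_one, AddMonoidAlgebra.coeff_single, Finsupp.single_apply]

end WordCount

lemma sum_smul_stepVec_apply {d : ℕ} (k : Fin d × Bool → ℕ) (t : Fin d) :
    (∑ s, k s • stepVec d s) t = k (t, true) - k (t, false) := by
  simp only [Finset.sum_apply, Pi.smul_apply, Fintype.sum_prod_type, Fintype.sum_bool, stepVec]
  rw [Fintype.sum_eq_single t fun x hx => by simp [Ne.symm hx]]
  simp [sub_eq_add_neg]

lemma sum_smul_stepVec_eq_zero_iff {d : ℕ} (k : Fin d × Bool → ℕ) :
    ∑ s, k s • stepVec d s = 0 ↔ ∀ t, k (t, true) = k (t, false) := by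
  simp only [funext_iff, sum_smul_stepVec_apply, Pi.zero_apply, sub_eq_zero, Nat.cast_inj]

section FstBool

variable {ι : Type*} [Fintype ι]

lemma sum_comp_fst_bool {M : Type*} [AddCommMonoid M] (m : ι → M) :
    ∑ s : ι × Bool, m s.1 = 2 • ∑ t, m t := by
  simp [Fintype.sum_prod_type, two_nsmul, sum_add_distrib]

lemma multinomial_comp_fst_bool (m : ι → ℕ) :
    multinomial univ (fun s : ι × Bool => m s.1) =
      centralBinom (∑ t, m t) * multinomial univ m ^ 2 := by
  set N := ∑ t, m t
  have hprod : ∏ s : ι × Bool, (m s.1)! = (∏ t, (m t)!) ^ 2 := by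
    simp [Fintype.prod_prod_type, sq, prod_mul_distrib]
  have hfact : (2 * N)! = centralBinom N * N ! * N ! := by
    rw [centralBinom_eq_two_mul_choose, ← choose_mul_factorial_mul_factorial (by omega : N ≤ 2 * N),
      show 2 * N - N = N by omega]
  apply Nat.eq_of_mul_eq_mul_left (pow_pos (prod_factorial_pos univ m) 2)
  rw [← hprod, multinomial_spec, sum_comp_fst_bool, smul_eq_mul, hfact, ← multinomial_spec univ m,
    hprod]
  ring

lemma sum_multinomial_filter_balanced [DecidableEq ι] (n : ℕ) :
    ∑ k ∈ ((univ : Finset (ι × Bool)).piAntidiag (2 * n)).filter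
        (fun k : ι × Bool → ℕ => ∀ t : ι, k (t, true) = k (t, false)),
      multinomial univ k = centralBinom n * multinomialSqSum (univ : Finset ι) n := by
  have hinj : Function.Injective fun (m : ι → ℕ) (s : ι × Bool) => m s.1 :=
    fun m m' h => funext fun t => congrFun h (t, true)
  have hset : ((univ : Finset (ι × Bool)).piAntidiag (2 * n)).filter
      (fun k : ι × Bool → ℕ => ∀ t : ι, k (t, true) = k (t, false)) =
      (univ.piAntidiag n).map ⟨_, hinj⟩ := by
    ext k
    simp only [mem_filter, mem_piAntidiag, mem_map, mem_univ, Function.Embedding.coeFn_mk]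
    constructor
    · rintro ⟨⟨hsum, -⟩, hbal⟩
      have hk : k = fun s => k (s.1, true) :=
        funext fun | (t, true) => rfl | (t, false) => (hbal t).symm
      refine ⟨fun t => k (t, true), ⟨?_, fun _ _ => trivial⟩, hk.symm⟩
      rw [hk, sum_comp_fst_bool (fun t => k (t, true)), smul_eq_mul] at hsum
      omega
    · rintro ⟨m, ⟨hm, -⟩, rfl⟩
      exact ⟨⟨by rw [sum_comp_fst_bool, hm, smul_eq_mul], fun _ _ => trivial⟩, fun _ => rfl⟩
  rw [hset, sum_map, multinomialSqSum, mul_sum]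
  refine sum_congr rfl fun m hm => ?_
  rw [Function.Embedding.coeFn_mk, multinomial_comp_fst_bool, (mem_piAntidiag.1 hm).1]

end FstBool

theorem closedCount_eq_centralBinom_mul (d n : ℕ) :
    closedCount d n = centralBinom n * multinomialSqSum (univ : Finset (Fin d)) n := by
  rw [closedCount, card_sum_eq_eq_coeff_pow, coeff_pow_sum_single,
    filter_congr fun k _ => sum_smul_stepVec_eq_zero_iff k]
  convert sum_multinomial_filter_balanced (ι := Fin d) n

theorem xSeq_eq_multinomialSqSum (d n : ℕ) :
    xSeq d n = multinomialSqSum (univ : Finset (Fin d)) n := by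
  rw [xSeq, closedCount_eq_centralBinom_mul, ← centralBinom_eq_two_mul_choose,
    Nat.mul_div_cancel_left _ (centralBinom_pos n)]

theorem lucas_property_xSeq_closedCount_general (d : ℕ) (p : ℕ) (hp : p.Prime) :
    (∀ n q : ℕ, q ≤ p - 1 →
        xSeq d (n * p + q) ≡ xSeq d n * xSeq d q [MOD p]) ∧
    (∀ n q : ℕ, q ≤ p - 1 →
        closedCount d (n * p + q) ≡ closedCount d n * closedCount d q [MOD p]) ∧
    (∀ n : ℕ, (p - 1) / 2 < n → n ≤ p - 1 → closedCount d n ≡ 0 [MOD p]) := by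
  have := Fact.mk hp
  have hp0 := hp.pos
  have hX := hasLucasProperty_multinomialSqSum p (univ : Finset (Fin d))
  have hA : HasLucasProperty p (closedCount d) := by
    rw [show closedCount d = centralBinom * multinomialSqSum univ from
      funext (closedCount_eq_centralBinom_mul d)]
    exact (hasLucasProperty_centralBinom p).mul hX
  refine ⟨fun n q hq => ?_, fun n q hq => hA n q (by omega), fun n hn hnp => ?_⟩
  · simp only [xSeq_eq_multinomialSqSum]
    exact hX n q (by omega)
  · rw [closedCount_eq_centralBinom_mul, centralBinom_eq_two_mul_choose, modEq_zero_iff_dvd]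
    exact dvd_mul_of_dvd_left (hp.dvd_choose (by omega) (by omega) (by omega)) _

/-- The sequences `x_n^{(d)}` and `A_{2n}^{(d)}` have the Lucas property, and moreover
`A_{2n}^{(d)} ≡ 0 (mod p)` for `(p-1)/2 < n ≤ p-1`. -/
theorem lucas_property_xSeq_closedCount (d : ℕ) (hd : 1 ≤ d) (p : ℕ) (hp : p.Prime) :
    (∀ n q : ℕ, q ≤ p - 1 →
        xSeq d (n * p + q) ≡ xSeq d n * xSeq d q [MOD p]) ∧
    (∀ n q : ℕ, q ≤ p - 1 →
        closedCount d (n * p + q) ≡ closedCount d n * closedCount d q [MOD p]) ∧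
    (∀ n : ℕ, (p - 1) / 2 < n → n ≤ p - 1 → closedCount d n ≡ 0 [MOD p]) :=
  lucas_property_xSeq_closedCount_general d p hp
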